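/- arXiv:2405.02924 — 2 statements merged into one kernel-verified Lean document; each statement's English description precedes it below -/
import Mathlib

section
/- Let f : ℝ → ℝ be defined as f(β) = inf_{x ∈ X} (a(x) - β b(x)) where X is nonempty and b(x) ≥ c > 0 for all x, and a(x) ≥ 0 is bounded. Then f is strictly decreasing, and if inf_{x} a(x)/b(x) = ρ is attained or approached, then f(β) ≤ 0 iff ρ ≤ β and f(β) > 0 iff ρ > β. -/
/-- Dinkelbach's lemma: with `f(β) = inf_x (a x - β b x)`, `b` bounded between
`c > 0` and `C`, `a` nonnegative and bounded by `M`, and `ρ = inf_x a x / b x`,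
the function `f` is strictly decreasing, `f β ≤ 0 ↔ ρ ≤ β`, and `f β > 0 ↔ β < ρ`. -/
theorem dinkelbach_sign
    {X : Type*} [Nonempty X] (a b : X → ℝ) (c C M : ℝ) (hc : 0 < c)
    (hb : ∀ x, c ≤ b x ∧ b x ≤ C) (ha : ∀ x, 0 ≤ a x ∧ a x ≤ M) :
    StrictAnti (fun β : ℝ => ⨅ x, (a x - β * b x)) ∧
    (∀ β : ℝ, (⨅ x, (a x - β * b x)) ≤ 0 ↔ (⨅ x, a x / b x) ≤ β) ∧
    (∀ β : ℝ, 0 < (⨅ x, (a x - β * b x)) ↔ β < (⨅ x, a x / b x)) := by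
  have hbpos : ∀ x, 0 < b x := fun x => hc.trans_le (hb x).1
  have hC : 0 < C := (hbpos (Classical.arbitrary X)).trans_le (hb (Classical.arbitrary X)).2
  have hbdd : ∀ β : ℝ, BddBelow (Set.range fun x => a x - β * b x) := by
    intro β
    refine ⟨-(|β| * C), ?_⟩
    rintro _ ⟨x, rfl⟩
    have h1 : β * b x ≤ |β| * C := by
      calc β * b x ≤ |β| * b x := mul_le_mul_of_nonneg_right (le_abs_self β) (hbpos x).le
        _ ≤ |β| * C := mul_le_mul_of_nonneg_left (hb x).2 (abs_nonneg β)
    have := (ha x).1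
    simp only [le_sub_iff_add_le]
    linarith
  have hrbdd : BddBelow (Set.range fun x => a x / b x) := by
    refine ⟨0, ?_⟩
    rintro _ ⟨x, rfl⟩
    exact div_nonneg (ha x).1 (hbpos x).le
  have key1 : ∀ β : ℝ, (⨅ x, a x / b x) ≤ β → (⨅ x, a x - β * b x) ≤ 0 := by
    intro β hβ
    refine le_of_forall_pos_le_add ?_
    intro ε hε
    have hεC : 0 < ε / C := div_pos hε hC
    have hlt : (⨅ x, a x / b x) < β + ε / C := by linarith
    obtain ⟨x, hx⟩ := exists_lt_of_ciInf_lt hlt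
    have hfle : (⨅ x, a x - β * b x) ≤ a x - β * b x := ciInf_le (hbdd β) x
    have hax : a x < (β + ε / C) * b x := (div_lt_iff₀ (hbpos x)).mp hx
    have h2 : a x - β * b x < ε / C * b x := by nlinarith
    have h3 : ε / C * b x ≤ ε := by
      rw [div_mul_eq_mul_div, div_le_iff₀ hC]
      nlinarith [(hb x).2, hε.le]
    linarith
  have key2 : ∀ β : ℝ, β < (⨅ x, a x / b x) → 0 < (⨅ x, a x - β * b x) := by
    intro β hβ
    have hle : c * ((⨅ x, a x / b x) - β) ≤ ⨅ x, a x - β * b x := by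
      apply le_ciInf
      intro x
      have h1 : (⨅ x, a x / b x) ≤ a x / b x := ciInf_le hrbdd x
      have heq : a x / b x * b x = a x := div_mul_cancel₀ _ (hbpos x).ne'
      nlinarith [(hb x).1, sub_pos.mpr (hβ.trans_le h1),
        mul_nonneg (sub_pos.mpr (hβ.trans_le h1)).le (sub_nonneg.mpr (hb x).1)]
    nlinarith [sub_pos.mpr hβ]
  refine ⟨?_, fun β => ⟨fun h => not_lt.mp fun h' => absurd (key2 β h') (not_lt.mpr h), key1 β⟩,
    fun β => ⟨fun h => not_le.mp fun h' => absurd (key1 β h') (not_le.mpr h), key2 β⟩⟩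
  intro β1 β2 hlt
  simp only
  have h1 : (⨅ x, a x - β2 * b x) + (β2 - β1) * c ≤ ⨅ x, a x - β1 * b x := by
    apply le_ciInf
    intro x
    have := ciInf_le (hbdd β2) x
    nlinarith [(hb x).1]
  nlinarith
end

section
/- Let η(ω) = inf_{Z ≥ 1} (1/Z) Σ_{k=0}^{Z-1} E[H(τ^{k+Y}(ω))]. Provided the minimum defining Z̄ exists, the optimal waiting time Z̄ = min{k ∈ ℕ : η(τ^k(ω)) ≥ β} satisfies the following: for every j < Z̄, the partial cost Σ from extending beyond j is negative, so choosing waiting time j is not optimal for the one-stage problem inf_{Z∈ℕ} E[Σ_{k=0}^{Z+Y-1}(H(τ^k(ω)) - β)]. -/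
open Finset

/-- Index policy optimality structure. Here `F j` stands for the expected future UoI
`E[H(τ^{j+Y}(ω))]` (nonnegative), `cost Z = c₀ + ∑_{j<Z} (F j - β)` is the one-stage
cost of waiting `Z` slots (the paper's `E[∑_{k=0}^{Z+Y-1}(H(τ^k ω) - β)]`), and
`η j = inf_{Z ≥ 1} (1/Z) ∑_{k<Z} F (k + j)` is the index of the belief `τ^j(ω)`.
Provided some index reaches the threshold `β` (so the minimum `Z̄` defining the policy
exists), every waiting time `j` smaller than `Z̄ = min {j : η j ≥ β}` is not optimal:
some larger waiting time has strictly smaller cost. -/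
theorem index_policy_not_optimal_below_threshold
    (F : ℕ → ℝ) (hF : ∀ n, 0 ≤ F n) (β c₀ : ℝ)
    (η : ℕ → ℝ)
    (hη : ∀ j, η j = ⨅ Z : {n : ℕ // 1 ≤ n}, (∑ k ∈ range (Z : ℕ), F (k + j)) / (Z : ℕ))
    (cost : ℕ → ℝ)
    (hcost : ∀ Z, cost Z = c₀ + ∑ j ∈ range Z, (F j - β))
    (hex : ∃ j, β ≤ η j) :
    ∀ j < Nat.find hex, ∃ Z : ℕ, j < Z ∧ cost Z < cost j := by
  intro j hj
  have hβ : η j < β := lt_of_not_ge (Nat.find_min hex hj)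
  rw [hη] at hβ
  obtain ⟨Z, hZ⟩ := exists_lt_of_ciInf_lt hβ
  have hZpos : (0 : ℝ) < (Z : ℕ) := by exact_mod_cast Z.2
  have hsum : ∑ k ∈ range (Z : ℕ), F (k + j) < β * (Z : ℕ) :=
    (div_lt_iff₀ hZpos).mp hZ
  refine ⟨j + Z, Nat.lt_add_of_pos_right Z.2, ?_⟩
  rw [hcost, hcost]
  have hsplit : ∑ k ∈ range (j + Z), (F k - β)
      = ∑ k ∈ range j, (F k - β) + ∑ k ∈ range (Z : ℕ), (F (k + j) - β) := by
    rw [Finset.sum_range_add]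
    simp [add_comm]
  have : ∑ k ∈ range (Z : ℕ), (F (k + j) - β) < 0 := by
    rw [Finset.sum_sub_distrib, Finset.sum_const, Finset.card_range, nsmul_eq_mul]
    linarith [hsum]
  rw [hsplit]
  linarith
end
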